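/- Let (Ω, 𝔄) be a measurable space, μ a probability measure on Ω, g : Ω → ℝ measurable with g(ω) > 0 for all ω, and for each n ∈ Fin N let a_n : Ω → ℝ be a nonnegative bounded measurable function and b_n ≥ 0 a real number; let p ∈ (0,1). Assume Z := ∑_{ξ : Fin N → Bool} ∫ g(ω) · ∏_n (if ξ n then p · a_n(ω) else (1−p) · b_n) dμ(ω) > 0, and let ν be the probability measure on Ω × (Fin N → Bool) determined by ν(A × {ξ}) = Z⁻¹ ∫_A g(ω) · ∏_n (if ξ n then p · a_n(ω) else (1−p) · b_n) dμ(ω). If ν equals the product of its two marginal measures, then for every n, either b_n = 0 or a_n is almost everywhere constant with respect to the first (Ω-)marginal of ν. -/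

import Mathlib

/-!
Write `F ξ` for the normalised density of the switch vector `ξ`, so that
`ν (A ×ˢ {ξ}) = ∫_A F ξ dμ`; since `ν ≤ 1`, every `F ξ` is integrable. Independence turns this
into `ν.fst A * ν.snd {ξ} = ∫_A F ξ dμ`. Two such identities sharing the factor `ν.fst A` give
`(∫_A F₁) (∫ F₀) = (∫_A F₀) (∫ F₁)` for all `A`, so `F₁` is a constant multiple of `F₀`, first
`μ`-a.e. and then `ν.fst`-a.e., because `ν.fst` is absolutely continuous with respect to
`F₀ • μ`. Take for `F₀`, `F₁` the densities of a switch vector of positive mass with its `n`-th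
switch turned off and on: they are `(1 - p) b_n G` and `p a_n G` with a common factor `G`, which
does not vanish `ν.fst`-a.e. when `b_n > 0`, so `a_n` is `ν.fst`-a.e. constant.
-/

open MeasureTheory

namespace MeasureTheory

open Set

variable {Ω : Type*} [MeasurableSpace Ω] {μ : Measure Ω}

theorem integrable_of_forall_setIntegral_le [IsFiniteMeasure μ] {f : Ω → ℝ} (hf : Measurable f)
    (hf_nonneg : ∀ x, 0 ≤ f x) {C : ℝ} (hC : ∀ A, MeasurableSet A → ∫ x in A, f x ∂μ ≤ C) :
    Integrable f μ := by
  set A : ℕ → Set Ω := fun k => {x | f x ≤ k}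
  have hA : ∀ k, MeasurableSet (A k) := fun k => measurableSet_le hf measurable_const
  have hA_mono : Monotone A := fun i j hij x (hx : f x ≤ i) => hx.trans (by exact_mod_cast hij)
  have hA_union : ⋃ k, A k = univ := eq_univ_of_forall fun x => mem_iUnion.2 (exists_nat_ge (f x))
  have hA_int : ∀ k, IntegrableOn f (A k) μ := fun k =>
    Measure.integrableOn_of_bounded (measure_ne_top μ _) hf.aestronglyMeasurable
      ((ae_restrict_mem (hA k)).mono fun x (hx : f x ≤ k) => by
        rwa [Real.norm_of_nonneg (hf_nonneg x)])
  refine ⟨hf.aestronglyMeasurable, (hasFiniteIntegral_iff_ofReal (ae_of_all _ hf_nonneg)).2 ?_⟩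
  calc ∫⁻ x, ENNReal.ofReal (f x) ∂μ
      = μ.withDensity (fun x => ENNReal.ofReal (f x)) (⋃ k, A k) := by
        rw [hA_union, withDensity_apply _ MeasurableSet.univ, setLIntegral_univ]
    _ = ⨆ k, ENNReal.ofReal (∫ x in A k, f x ∂μ) := by
        rw [hA_mono.measure_iUnion]
        refine iSup_congr fun k => ?_
        rw [withDensity_apply _ (hA k),
          ofReal_integral_eq_lintegral_ofReal (hA_int k) (ae_of_all _ hf_nonneg)]
    _ ≤ ENNReal.ofReal C := iSup_le fun k => ENNReal.ofReal_le_ofReal (hC _ (hA k))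
    _ < ⊤ := ENNReal.ofReal_lt_top

variable {ρ : Measure Ω}

theorem setIntegral_mul_integral_comm_of_forall_measure_mul_eq [IsProbabilityMeasure ρ]
    {σ₀ σ₁ : ENNReal} {F₀ F₁ : Ω → ℝ} (hF₀ : 0 ≤ F₀) (hF₁ : 0 ≤ F₁)
    (h₀ : ∀ A, MeasurableSet A → ρ A * σ₀ = ENNReal.ofReal (∫ x in A, F₀ x ∂μ))
    (h₁ : ∀ A, MeasurableSet A → ρ A * σ₁ = ENNReal.ofReal (∫ x in A, F₁ x ∂μ))
    {A : Set Ω} (hA : MeasurableSet A) :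
    (∫ x in A, F₁ x ∂μ) * ∫ x, F₀ x ∂μ = (∫ x in A, F₀ x ∂μ) * ∫ x, F₁ x ∂μ := by
  have hσ₀ : σ₀ = ENNReal.ofReal (∫ x, F₀ x ∂μ) := by simpa using h₀ univ .univ
  have hσ₁ : σ₁ = ENNReal.ofReal (∫ x, F₁ x ∂μ) := by simpa using h₁ univ .univ
  have h : ENNReal.ofReal (∫ x in A, F₁ x ∂μ) * ENNReal.ofReal (∫ x, F₀ x ∂μ) =
      ENNReal.ofReal (∫ x in A, F₀ x ∂μ) * ENNReal.ofReal (∫ x, F₁ x ∂μ) := by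
    rw [← h₀ A hA, ← h₁ A hA, ← hσ₀, ← hσ₁, mul_right_comm]
  rwa [← ENNReal.ofReal_mul (integral_nonneg hF₁), ← ENNReal.ofReal_mul (integral_nonneg hF₀),
    ENNReal.ofReal_eq_ofReal_iff (mul_nonneg (integral_nonneg hF₁) (integral_nonneg hF₀))
      (mul_nonneg (integral_nonneg hF₀) (integral_nonneg hF₁))] at h

theorem ae_eq_const_mul_of_forall_setIntegral_mul_integral_eq {F₀ F₁ : Ω → ℝ}
    (hF₀ : Integrable F₀ μ) (hF₁ : Integrable F₁ μ) (hF₀_integral : ∫ x, F₀ x ∂μ ≠ 0)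
    (h : ∀ A, MeasurableSet A →
      (∫ x in A, F₁ x ∂μ) * ∫ x, F₀ x ∂μ = (∫ x in A, F₀ x ∂μ) * ∫ x, F₁ x ∂μ) :
    F₁ =ᵐ[μ] fun x => ((∫ x, F₁ x ∂μ) / ∫ x, F₀ x ∂μ) * F₀ x :=
  hF₁.ae_eq_of_forall_setIntegral_eq _ _ (hF₀.const_mul _) fun A hA _ => by
    rw [integral_const_mul, div_mul_eq_mul_div, eq_div_iff hF₀_integral, h A hA, mul_comm]

theorem exists_ae_ne_zero_and_eq_const_mul_of_forall_measure_mul_eq [IsProbabilityMeasure ρ]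
    {σ₀ σ₁ : ENNReal} {F₀ F₁ : Ω → ℝ} (hF₀_meas : Measurable F₀) (hF₀ : Integrable F₀ μ)
    (hF₁ : Integrable F₁ μ) (hF₀_nonneg : 0 ≤ F₀) (hF₁_nonneg : 0 ≤ F₁)
    (hF₀_pos : 0 < ∫ x, F₀ x ∂μ)
    (h₀ : ∀ A, MeasurableSet A → ρ A * σ₀ = ENNReal.ofReal (∫ x in A, F₀ x ∂μ))
    (h₁ : ∀ A, MeasurableSet A → ρ A * σ₁ = ENNReal.ofReal (∫ x in A, F₁ x ∂μ)) :
    ∃ κ : ℝ, ∀ᵐ x ∂ρ, F₀ x ≠ 0 ∧ F₁ x = κ * F₀ x := by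
  have hσ₀ : σ₀ ≠ 0 := by
    rintro rfl
    exact hF₀_pos.not_ge (by simpa using h₀ univ .univ)
  have hρ_null : ∀ A, MeasurableSet A → ∫ x in A, F₀ x ∂μ = 0 → ρ A = 0 := fun A hA hA₀ =>
    (mul_eq_zero.1 (by rw [h₀ A hA, hA₀, ENNReal.ofReal_zero])).resolve_right hσ₀
  have hρμ : ρ ≪ μ := Measure.AbsolutelyContinuous.mk fun A hA hμA =>
    hρ_null A hA (setIntegral_measure_zero _ hμA)
  have hF₀_ne : ∀ᵐ x ∂ρ, F₀ x ≠ 0 := by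
    simp only [ae_iff, ne_eq, not_not]
    exact hρ_null _ (measurableSet_eq_fun hF₀_meas measurable_const)
      (setIntegral_eq_zero_of_forall_eq_zero fun x hx => hx)
  exact ⟨_, hF₀_ne.and (hρμ.ae_le (ae_eq_const_mul_of_forall_setIntegral_mul_integral_eq hF₀ hF₁
    hF₀_pos.ne' fun A hA =>
      setIntegral_mul_integral_comm_of_forall_measure_mul_eq hF₀_nonneg hF₁_nonneg h₀ h₁ hA))⟩

end MeasureTheory

theorem Finset.prod_apply_update {ι α M : Type*} [Fintype ι] [DecidableEq ι] [CommMonoid M]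
    (w : ι → α → M) (ξ : ι → α) (n : ι) (v : α) :
    ∏ m, w m (Function.update ξ n v m) = w n v * ∏ m ∈ Finset.univ \ {n}, w m (ξ m) := by
  simp_rw [Function.apply_update w]
  exact Finset.prod_update_of_mem (Finset.mem_univ n) _ _

section SwitchDensity

variable {Ω ι : Type*} [Fintype ι]

def switchDensity (g : Ω → ℝ) (p : ℝ) (a : ι → Ω → ℝ) (b : ι → ℝ) (ξ : ι → Bool) (ω : Ω) : ℝ :=
  g ω * ∏ n, if ξ n then p * a n ω else (1 - p) * b n

variable {g : Ω → ℝ} {p : ℝ} {a : ι → Ω → ℝ} {b : ι → ℝ}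

theorem measurable_switchDensity [MeasurableSpace Ω] (hg : Measurable g)
    (ha : ∀ n, Measurable (a n)) (ξ : ι → Bool) : Measurable (switchDensity g p a b ξ) :=
  hg.mul (Finset.measurable_prod _ fun n _ => by split_ifs <;> fun_prop)

theorem switchDensity_nonneg (hg : 0 ≤ g) (ha : ∀ n, 0 ≤ a n) (hb : 0 ≤ b) (hp : p ∈ Set.Icc 0 1)
    (ξ : ι → Bool) : 0 ≤ switchDensity g p a b ξ := fun ω =>
  mul_nonneg (hg ω) <| Finset.prod_nonneg fun n _ => by
    split_ifs
    · exact mul_nonneg hp.1 (ha n ω)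
    · exact mul_nonneg (sub_nonneg.2 hp.2) (hb n)

theorem switchDensity_update [DecidableEq ι] (ξ : ι → Bool) (n : ι) (v : Bool) (ω : Ω) :
    switchDensity g p a b (Function.update ξ n v) ω = (if v then p * a n ω else (1 - p) * b n) *
      (g ω * ∏ m ∈ Finset.univ \ {n}, if ξ m then p * a m ω else (1 - p) * b m) := by
  have h := Finset.prod_apply_update (fun m v => if v then p * a m ω else (1 - p) * b m) ξ n v
  beta_reduce at h
  rw [switchDensity, h]
  ring

theorem support_switchDensity_subset_update_false [DecidableEq ι] (ξ : ι → Bool) (n : ι)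
    (hb : (1 - p) * b n ≠ 0) :
    Function.support (switchDensity g p a b ξ) ⊆
      Function.support (switchDensity g p a b (Function.update ξ n false)) := by
  intro ω hω
  rw [Function.mem_support, ← Function.update_eq_self n ξ, switchDensity_update] at hω
  rw [Function.mem_support, switchDensity_update, if_neg Bool.false_ne_true]
  exact mul_ne_zero hb (right_ne_zero_of_mul hω)

end SwitchDensity

theorem pfslda_multi_switch_independence_general
    {Ω : Type*} [MeasurableSpace Ω]
    (μ : Measure Ω) [IsProbabilityMeasure μ]
    (g : Ω → ℝ) (hg_meas : Measurable g) (hg_pos : ∀ ω, 0 < g ω)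
    (N : ℕ)
    (a : Fin N → Ω → ℝ)
    (ha_meas : ∀ n, Measurable (a n))
    (ha_nn : ∀ n ω, 0 ≤ a n ω)
    (b : Fin N → ℝ) (hb : ∀ n, 0 ≤ b n)
    (p : ℝ) (hp : p ∈ Set.Ioo (0 : ℝ) 1)
    (Z : ℝ)
    (hZ : Z = ∑ ξ : Fin N → Bool,
      ∫ ω, g ω * ∏ n, (if ξ n then p * a n ω else (1 - p) * b n) ∂μ)
    (hZpos : 0 < Z)
    (ν : Measure (Ω × (Fin N → Bool))) [IsProbabilityMeasure ν]
    (hν : ∀ (A : Set Ω) (ξ : Fin N → Bool), MeasurableSet A →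
      ν (A ×ˢ ({ξ} : Set (Fin N → Bool))) =
        ENNReal.ofReal (Z⁻¹ *
          ∫ ω in A, g ω * ∏ n, (if ξ n then p * a n ω else (1 - p) * b n) ∂μ))
    (hindep : ν = ν.fst.prod ν.snd) :
    ∀ n, b n = 0 ∨ ∃ c : ℝ, a n =ᵐ[ν.fst] fun _ => c := by
  intro n
  refine (hb n).eq_or_lt.imp Eq.symm fun hbn => ?_
  set F := switchDensity (fun ω => Z⁻¹ * g ω) p a b
  have hF_meas : ∀ ξ, Measurable (F ξ) := measurable_switchDensity (hg_meas.const_mul _) ha_meas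
  have hF_nonneg : ∀ ξ, 0 ≤ F ξ := switchDensity_nonneg
    (fun ω => (mul_pos (inv_pos.2 hZpos) (hg_pos ω)).le) ha_nn hb (Set.Ioo_subset_Icc_self hp)
  have hνF : ∀ ξ A, MeasurableSet A →
      ν (A ×ˢ {ξ}) = ENNReal.ofReal (∫ x in A, F ξ x ∂μ) := fun ξ A hA => by
    simp_rw [hν A ξ hA, F, switchDensity, mul_assoc, integral_const_mul]
  have hF_int : ∀ ξ, Integrable (F ξ) μ := fun ξ =>
    integrable_of_forall_setIntegral_le (hF_meas ξ) (hF_nonneg ξ) (C := 1) fun A hA =>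
      ENNReal.ofReal_le_one.1 ((hνF ξ A hA).symm.trans_le prob_le_one)
  have hfst_snd : ∀ ξ A, MeasurableSet A →
      ν.fst A * ν.snd {ξ} = ENNReal.ofReal (∫ x in A, F ξ x ∂μ) := fun ξ A hA => by
    rw [← Measure.prod_prod, ← hindep, hνF ξ A hA]
  obtain ⟨ξ, -, hξ⟩ : ∃ ξ ∈ Finset.univ, (0 : ℝ) < ∫ x, F ξ x ∂μ := by
    refine Finset.exists_lt_of_sum_lt ?_
    simp_rw [F, switchDensity, mul_assoc, integral_const_mul, ← Finset.mul_sum, ← hZ]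
    simp [hZpos.ne']
  have hξ₀ : 0 < ∫ x, F (Function.update ξ n false) x ∂μ := by
    rw [integral_pos_iff_support_of_nonneg (hF_nonneg _) (hF_int _)] at hξ ⊢
    exact hξ.trans_le (measure_mono (support_switchDensity_subset_update_false ξ n
      (mul_pos (sub_pos.2 hp.2) hbn).ne'))
  obtain ⟨κ, hκ⟩ := exists_ae_ne_zero_and_eq_const_mul_of_forall_measure_mul_eq (hF_meas _)
    (hF_int _) (hF_int (Function.update ξ n true)) (hF_nonneg _) (hF_nonneg _) hξ₀
    (hfst_snd _) (hfst_snd _)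
  refine ⟨κ * ((1 - p) * b n) / p, hκ.mono fun ω ⟨hne, heq⟩ => ?_⟩
  simp only [F, switchDensity_update, Bool.false_eq_true, ↓reduceIte] at hne heq
  rw [eq_div_iff hp.1.ne']
  apply mul_right_cancel₀ (right_ne_zero_of_mul hne)
  linear_combination heq

/-- Multi-switch version of the key step in Theorem 1's proof: if the
posterior over the latent variable `ω` and the vector of Bernoulli channel
switches `ξ` (with per-word product density) equals the product of its
marginals, then for every word `n` either the irrelevant-channel probability
`b n` vanishes or the relevant-channel likelihood `a n` is a.e. constant with
respect to the first marginal of the posterior. -/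
theorem pfslda_multi_switch_independence
    {Ω : Type*} [MeasurableSpace Ω]
    (μ : Measure Ω) [IsProbabilityMeasure μ]
    (g : Ω → ℝ) (hg_meas : Measurable g) (hg_pos : ∀ ω, 0 < g ω)
    (N : ℕ)
    (a : Fin N → Ω → ℝ)
    (ha_meas : ∀ n, Measurable (a n))
    (ha_nn : ∀ n ω, 0 ≤ a n ω)
    (ha_bdd : ∀ n, ∃ C : ℝ, ∀ ω, a n ω ≤ C)
    (b : Fin N → ℝ) (hb : ∀ n, 0 ≤ b n)
    (p : ℝ) (hp : p ∈ Set.Ioo (0 : ℝ) 1)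
    (Z : ℝ)
    (hZ : Z = ∑ ξ : Fin N → Bool,
      ∫ ω, g ω * ∏ n, (if ξ n then p * a n ω else (1 - p) * b n) ∂μ)
    (hZpos : 0 < Z)
    (ν : Measure (Ω × (Fin N → Bool))) [IsProbabilityMeasure ν]
    (hν : ∀ (A : Set Ω) (ξ : Fin N → Bool), MeasurableSet A →
      ν (A ×ˢ ({ξ} : Set (Fin N → Bool))) =
        ENNReal.ofReal (Z⁻¹ *
          ∫ ω in A, g ω * ∏ n, (if ξ n then p * a n ω else (1 - p) * b n) ∂μ))
    (hindep : ν = ν.fst.prod ν.snd) :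
    ∀ n, b n = 0 ∨ ∃ c : ℝ, a n =ᵐ[ν.fst] fun _ => c :=
  pfslda_multi_switch_independence_general μ g hg_meas hg_pos N a ha_meas ha_nn b hb p hp Z hZ hZpos
    ν hν hindep
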